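/- arXiv:1603.01498 — 2 statements merged into one kernel-verified Lean document; each statement's English description precedes it below -/
import Mathlib

section
/- Euler's identity: ζ(2,1) = ζ(3), i.e. the double sum ∑_{k>l≥1} 1/(k² l) equals ∑_{k≥1} 1/k³. -/
/-!
Consider Tornheim's sum `T = ∑_{a,b ≥ 1} 1/(ab(a+b))`. Summing over `b` first, the telescoping
series `∑_b a/(b(a+b)) = H_a` gives `T = ∑_a H_a/a² = ∑_a H_{a-1}/a² + ζ(3)`, and
`∑_k H_{k-1}/k²` is `ζ(2,1)` summed over `l < k` first. Summing along the antidiagonals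
`a + b = k` instead, `1/(ab) = (1/a + 1/b)/k` gives `T = 2 ∑_k H_{k-1}/k² = 2 ζ(2,1)`.
Everything converges because `H_n ≤ 2√n`.
-/

open Finset Filter Topology

lemma harmonic_nonneg (n : ℕ) : 0 ≤ harmonic n :=
  sum_nonneg fun _ _ ↦ by positivity

lemma harmonic_le_two_mul_sqrt (n : ℕ) : (harmonic n : ℝ) ≤ 2 * √n := by
  rcases Nat.eq_zero_or_pos n with rfl | hn
  · simp
  have hsqrt : 0 < √(n : ℝ) := Real.sqrt_pos.2 (by exact_mod_cast hn)
  have hlog : Real.log n ≤ 2 * √n - 2 := by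
    have := Real.log_le_sub_one_of_pos hsqrt
    rw [Real.log_sqrt n.cast_nonneg] at this
    linarith
  linarith [harmonic_le_one_add_log n]

lemma summable_harmonic_div_sq : Summable fun n : ℕ ↦ (harmonic n : ℝ) / n ^ 2 := by
  refine .of_nonneg_of_le (fun n ↦ by have := harmonic_nonneg n; positivity) (fun n ↦ ?_)
    ((Real.summable_nat_rpow.2 (by norm_num : (-3 / 2 : ℝ) < -1)).mul_left 2)
  rcases Nat.eq_zero_or_pos n with rfl | hn
  · simp
  have hn' : (0 : ℝ) < n := by exact_mod_cast hn
  calc (harmonic n : ℝ) / n ^ 2 ≤ 2 * √n / n ^ 2 := by gcongr; exact harmonic_le_two_mul_sqrt n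
    _ = 2 * (n : ℝ) ^ (-3 / 2 : ℝ) := by
      rw [Real.sqrt_eq_rpow, mul_div_assoc, ← Real.rpow_natCast, ← Real.rpow_sub hn']
      norm_num

lemma summable_harmonic_div_succ_sq :
    Summable fun m : ℕ ↦ (harmonic m : ℝ) / ((m : ℝ) + 1) ^ 2 := by
  refine .of_nonneg_of_le (fun n ↦ by have := harmonic_nonneg n; positivity) (fun m ↦ ?_)
    ((summable_nat_add_iff 1).2 summable_harmonic_div_sq)
  have := harmonic_nonneg m
  rw [harmonic_succ, Rat.cast_add]
  push_cast
  gcongr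
  exact le_add_of_nonneg_right (by positivity)

lemma hasSum_sub_nat_add_of_antitone {f : ℕ → ℝ} (hf : Antitone f)
    (hf0 : Tendsto f atTop (𝓝 0)) (k : ℕ) :
    HasSum (fun n ↦ f n - f (n + k)) (∑ i ∈ range k, f i) := by
  rw [hasSum_iff_tendsto_nat_of_nonneg (fun n ↦ sub_nonneg.2 (hf (n.le_add_right k)))]
  have hpartial (N : ℕ) : ∑ n ∈ range N, (f n - f (n + k)) =
      ∑ i ∈ range k, f i - ∑ i ∈ range k, f (N + i) := by
    have h₁ := sum_range_add f N k
    have h₂ : ∑ n ∈ range (N + k), f n = ∑ i ∈ range k, f i + ∑ n ∈ range N, f (n + k) := by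
      rw [add_comm N k, sum_range_add]
      simp_rw [add_comm k]
    rw [sum_sub_distrib]
    linarith
  have htail : Tendsto (fun N ↦ ∑ i ∈ range k, f (N + i)) atTop (𝓝 0) := by
    simpa using tendsto_finsetSum (range k) fun i _ ↦
      hf0.comp (tendsto_add_atTop_nat i)
  simpa only [hpartial, sub_zero] using tendsto_const_nhds.sub htail

lemma hasSum_natCast_div_mul_add (k : ℕ) :
    HasSum (fun n : ℕ ↦ (k : ℝ) / (((n : ℝ) + 1) * ((n : ℝ) + 1 + k))) (harmonic k) := by
  have hanti : Antitone fun n : ℕ ↦ 1 / ((n : ℝ) + 1) := fun a b hab ↦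
    one_div_le_one_div_of_le (by positivity) (by gcongr)
  convert hasSum_sub_nat_add_of_antitone hanti tendsto_one_div_add_atTop_nhds_zero_nat k using 1
  · ext n
    push_cast
    field_simp
    ring
  · simp [harmonic]

/-- The term of Tornheim's sum at `a = m + 1`, `b = n + 1`. -/
noncomputable def tornheimTerm (p : ℕ × ℕ) : ℝ :=
  1 / (((p.1 : ℝ) + 1) * ((p.2 : ℝ) + 1) * ((p.1 : ℝ) + p.2 + 2))

lemma tornheimTerm_nonneg : 0 ≤ tornheimTerm := fun p ↦ by
  unfold tornheimTerm; positivity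

lemma hasSum_tornheimTerm_row (m : ℕ) :
    HasSum (fun n ↦ tornheimTerm (m, n)) ((harmonic (m + 1) : ℝ) / ((m : ℝ) + 1) ^ 2) := by
  have hterm (n : ℕ) : tornheimTerm (m, n) =
      ((m + 1 : ℕ) : ℝ) / (((n : ℝ) + 1) * ((n : ℝ) + 1 + (m + 1 : ℕ))) / ((m : ℝ) + 1) ^ 2 := by
    rw [tornheimTerm]
    push_cast
    field_simp
    ring
  simpa only [hterm] using (hasSum_natCast_div_mul_add (m + 1)).div_const (((m : ℝ) + 1) ^ 2)

lemma summable_tornheimTerm : Summable tornheimTerm := by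
  refine (summable_prod_of_nonneg tornheimTerm_nonneg).2
    ⟨fun m ↦ (hasSum_tornheimTerm_row m).summable, ?_⟩
  simp only [(hasSum_tornheimTerm_row _).tsum_eq]
  exact_mod_cast (summable_nat_add_iff 1).2 summable_harmonic_div_sq

lemma tsum_tornheimTerm_eq_add_tsum_inv_cube : ∑' p, tornheimTerm p =
    ∑' m : ℕ, (harmonic m : ℝ) / ((m : ℝ) + 1) ^ 2 + ∑' m : ℕ, 1 / ((m : ℝ) + 1) ^ 3 := by
  have hcube : Summable fun m : ℕ ↦ 1 / ((m : ℝ) + 1) ^ 3 := by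
    exact_mod_cast (summable_nat_add_iff 1).2 (Real.summable_one_div_nat_pow.2 (by norm_num))
  rw [summable_tornheimTerm.tsum_prod' fun m ↦ (hasSum_tornheimTerm_row m).summable,
    ← summable_harmonic_div_succ_sq.tsum_add hcube]
  refine tsum_congr fun m ↦ ?_
  rw [(hasSum_tornheimTerm_row m).tsum_eq, harmonic_succ]
  push_cast
  field_simp

lemma sum_antidiagonal_tornheimTerm (j : ℕ) :
    ∑ p ∈ antidiagonal j, tornheimTerm p = 2 * ((harmonic (j + 1) : ℝ) / ((j : ℝ) + 2) ^ 2) := by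
  have hsplit : ∀ p ∈ antidiagonal j, tornheimTerm p =
      (1 / ((p.1 : ℝ) + 1) + 1 / ((p.2 : ℝ) + 1)) / ((j : ℝ) + 2) ^ 2 := by
    intro p hp
    rw [HasAntidiagonal.mem_antidiagonal] at hp
    have hj : (p.1 : ℝ) + p.2 = j := by exact_mod_cast hp
    simp only [tornheimTerm]
    rw [hj, show (j : ℝ) + 2 = (p.1 + 1) + (p.2 + 1) by linarith]
    field_simp
    ring
  have hfst : ∑ p ∈ antidiagonal j, 1 / ((p.1 : ℝ) + 1) = harmonic (j + 1) := by
    rw [Nat.sum_antidiagonal_eq_sum_range_succ (fun a _ ↦ 1 / ((a : ℝ) + 1))]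
    simp [harmonic]
  have hsnd : ∑ p ∈ antidiagonal j, 1 / ((p.2 : ℝ) + 1) = harmonic (j + 1) := by
    rw [← Nat.sum_antidiagonal_swap]
    exact hfst
  rw [sum_congr rfl hsplit, ← sum_div, sum_add_distrib, hfst, hsnd]
  ring

lemma tsum_tornheimTerm_eq_two_mul :
    ∑' p, tornheimTerm p = 2 * ∑' m : ℕ, (harmonic m : ℝ) / ((m : ℝ) + 1) ^ 2 := by
  let e := HasAntidiagonal.sigmaAntidiagonalEquivProd (A := ℕ)
  have hsum : Summable fun c ↦ tornheimTerm (e c) := e.summable_iff.2 summable_tornheimTerm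
  rw [← e.tsum_eq, hsum.tsum_sigma' fun _ ↦ .of_finite,
    summable_harmonic_div_succ_sq.tsum_eq_zero_add]
  simp only [e, HasAntidiagonal.sigmaAntidiagonalEquivProd_apply, Finset.tsum_subtype,
    sum_antidiagonal_tornheimTerm, harmonic_zero, Rat.cast_zero, zero_div, zero_add]
  rw [← tsum_mul_left]
  refine tsum_congr fun j ↦ ?_
  push_cast
  ring

def lowerTriangleEquiv : (Σ m : ℕ, Fin m) ≃ {p : ℕ × ℕ // p.2 < p.1 ∧ 1 ≤ p.2} where
  toFun x := ⟨(x.1 + 1, x.2 + 1), by omega⟩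
  invFun p := ⟨p.1.1 - 1, ⟨p.1.2 - 1, by omega⟩⟩
  left_inv x := rfl
  right_inv p := by ext <;> dsimp only <;> omega

lemma tsum_lowerTriangle_eq_tsum_harmonic :
    ∑' p : {p : ℕ × ℕ // p.2 < p.1 ∧ 1 ≤ p.2}, (1 : ℝ) / ((p.1.1 : ℝ) ^ 2 * (p.1.2 : ℝ)) =
      ∑' m : ℕ, (harmonic m : ℝ) / ((m : ℝ) + 1) ^ 2 := by
  let g (x : Σ m : ℕ, Fin m) : ℝ := 1 / (((x.1 : ℝ) + 1) ^ 2 * ((x.2 : ℝ) + 1))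
  have hrow (m : ℕ) : ∑' i : Fin m, g ⟨m, i⟩ = (harmonic m : ℝ) / ((m : ℝ) + 1) ^ 2 := by
    rw [tsum_fintype,
      Fin.sum_univ_eq_sum_range (fun i ↦ 1 / (((m : ℝ) + 1) ^ 2 * ((i : ℝ) + 1))) m]
    simp [harmonic, sum_div, div_mul_eq_div_div_swap]
  have hsum : Summable g :=
    (summable_sigma_of_nonneg fun _ ↦ by positivity).2
      ⟨fun _ ↦ .of_finite, by simpa only [hrow] using summable_harmonic_div_succ_sq⟩
  calc _ = ∑' x, g x := by
        rw [← lowerTriangleEquiv.tsum_eq]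
        refine tsum_congr fun x ↦ ?_
        simp [g, lowerTriangleEquiv]
    _ = _ := by rw [hsum.tsum_sigma' fun _ ↦ .of_finite]; exact tsum_congr hrow

/-- Euler's identity ζ(2,1) = ζ(3): the double sum over pairs k > l ≥ 1 of
1/(k² l) equals the sum over k ≥ 1 of 1/k³. -/
theorem euler_zeta_two_one_eq_zeta_three :
    ∑' p : {p : ℕ × ℕ // p.2 < p.1 ∧ 1 ≤ p.2},
      (1 : ℝ) / ((p.1.1 : ℝ) ^ 2 * (p.1.2 : ℝ)) =
    ∑' k : {k : ℕ // 1 ≤ k}, (1 : ℝ) / (k : ℝ) ^ 3 := by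
  have hzeta3 : ∑' k : {k : ℕ // 1 ≤ k}, (1 : ℝ) / (k : ℝ) ^ 3 =
      ∑' m : ℕ, 1 / ((m + 1 : ℕ) : ℝ) ^ 3 :=
    tsum_pnat_eq_tsum_succ (f := fun k : ℕ ↦ 1 / (k : ℝ) ^ 3)
  push_cast at hzeta3
  rw [tsum_lowerTriangle_eq_tsum_harmonic, hzeta3]
  linarith [tsum_tornheimTerm_eq_two_mul, tsum_tornheimTerm_eq_add_tsum_inv_cube]
end

section
/- The shuffle relation ζ(2,3) + 3ζ(3,2) + 6ζ(4,1) = ζ(2)ζ(3). -/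
/-- The single zeta value ζ(n) = ∑_{k ≥ 1} 1/kⁿ. -/
noncomputable def zeta1 (n : ℕ) : ℝ :=
  ∑' k : {k : ℕ // 1 ≤ k}, (1 : ℝ) / (k : ℝ) ^ n

/-- The double zeta value ζ(n₁,n₂) = ∑_{k > l ≥ 1} 1/(k^{n₁} l^{n₂}). -/
noncomputable def zeta2 (m n : ℕ) : ℝ :=
  ∑' p : {p : ℕ × ℕ // p.2 < p.1 ∧ 1 ≤ p.2},
    (1 : ℝ) / ((p.1.1 : ℝ) ^ m * (p.1.2 : ℝ) ^ n)

/-! Writing `N = k + l`, the partial fraction expansion of `1 / (k² l³)` splits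
`ζ(2) ζ(3) = ∑_{k,l ≥ 1} 1 / (k² l³)` into five double sums, each a multiple of a double zeta
value because `(k, l) ↦ (k + l, k)` and `(k, l) ↦ (k + l, l)` are bijections onto the index set
`N > k ≥ 1`. -/

namespace DoubleZeta

abbrev Index := {p : ℕ × ℕ // p.2 < p.1 ∧ 1 ≤ p.2}

noncomputable def term (a b : ℕ) (p : ℕ × ℕ) : ℝ :=
  1 / ((p.1 : ℝ) ^ a * (p.2 : ℝ) ^ b)

lemma term_le_term_two_two {a b : ℕ} (ha : 2 ≤ a) (hab : 4 ≤ a + b) (p : Index) :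
    term a b p ≤ term 2 2 p := by
  obtain ⟨⟨N, k⟩, hkN, hk⟩ := p
  have hk1 : (1 : ℝ) ≤ k := by exact_mod_cast hk
  have hkN' : (k : ℝ) ≤ N := by exact_mod_cast hkN.le
  have hN : (0 : ℝ) < N := by linarith
  apply one_div_le_one_div_of_le (by positivity)
  calc (N : ℝ) ^ 2 * (k : ℝ) ^ 2 ≤ (N : ℝ) ^ 2 * ((k : ℝ) ^ (a - 2) * (k : ℝ) ^ b) := by
        rw [← pow_add]; gcongr; omega
    _ ≤ (N : ℝ) ^ 2 * ((N : ℝ) ^ (a - 2) * (k : ℝ) ^ b) := by gcongr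
    _ = (N : ℝ) ^ a * (k : ℝ) ^ b := by rw [← mul_assoc, ← pow_add, Nat.add_sub_cancel' ha]

lemma summable_term_two_two : Summable (term 2 2) := by
  have h : Summable (fun n : ℕ => 1 / (n : ℝ) ^ 2) := Real.summable_one_div_nat_pow.mpr one_lt_two
  refine (h.mul_of_nonneg h (fun _ => by positivity) (fun _ => by positivity)).congr fun p => ?_
  rw [term, one_div_mul_one_div]

lemma hasSum_term {a b : ℕ} (ha : 2 ≤ a) (hab : 4 ≤ a + b) :
    HasSum (fun p : Index => term a b p) (zeta2 a b) :=
  ((summable_term_two_two.subtype _).of_nonneg_of_le (fun _ => by unfold term; positivity)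
    (term_le_term_two_two ha hab)).hasSum

lemma hasSum_zeta1 {n : ℕ} (hn : 2 ≤ n) :
    HasSum (fun k : {k : ℕ // 1 ≤ k} => 1 / (k : ℝ) ^ n) (zeta1 n) :=
  ((Real.summable_one_div_nat_pow.mpr hn).subtype _).hasSum

def sumFstEquiv : {k : ℕ // 1 ≤ k} × {l : ℕ // 1 ≤ l} ≃ Index where
  toFun z := ⟨(z.1 + z.2, z.1), by have := z.2.2; omega, z.1.2⟩
  invFun p := (⟨p.1.2, p.2.2⟩, ⟨p.1.1 - p.1.2, by have := p.2.1; omega⟩)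
  left_inv z := by ext <;> simp
  right_inv p := by have := p.2.1; ext <;> dsimp; omega

lemma one_div_sq_mul_one_div_cube {K : Type*} [Field K] {x y : K}
    (hx : x ≠ 0) (hy : y ≠ 0) (hxy : x + y ≠ 0) :
    1 / x ^ 2 * (1 / y ^ 3) =
      (1 / ((x + y) ^ 3 * x ^ 2) + 3 * (1 / ((x + y) ^ 4 * x))) +
      (1 / ((x + y) ^ 2 * y ^ 3) + 2 * (1 / ((x + y) ^ 3 * y ^ 2)) +
        3 * (1 / ((x + y) ^ 4 * y))) := by
  field_simp
  ring

lemma one_div_sq_mul_one_div_cube_eq_term (z : {k : ℕ // 1 ≤ k} × {l : ℕ // 1 ≤ l}) :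
    1 / (z.1 : ℝ) ^ 2 * (1 / (z.2 : ℝ) ^ 3) =
      (term 3 2 (sumFstEquiv z) + 3 * term 4 1 (sumFstEquiv z)) +
      (term 2 3 (sumFstEquiv z.swap) + 2 * term 3 2 (sumFstEquiv z.swap) +
        3 * term 4 1 (sumFstEquiv z.swap)) := by
  obtain ⟨⟨k, hk⟩, ⟨l, hl⟩⟩ := z
  have hk' : (k : ℝ) ≠ 0 := by positivity
  have hl' : (l : ℝ) ≠ 0 := by positivity
  simp only [sumFstEquiv, Equiv.coe_fn_mk, Prod.swap_prod_mk, term, pow_one, Nat.cast_add]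
  rw [add_comm (l : ℝ)]
  exact one_div_sq_mul_one_div_cube hk' hl' (by positivity)

lemma hasSum_one_div_sq_mul_one_div_cube :
    HasSum (fun z : {k : ℕ // 1 ≤ k} × {l : ℕ // 1 ≤ l} => 1 / (z.1 : ℝ) ^ 2 * (1 / (z.2 : ℝ) ^ 3))
      (zeta2 2 3 + 3 * zeta2 3 2 + 6 * zeta2 4 1) := by
  have hk : HasSum (fun p : Index => term 3 2 p + 3 * term 4 1 p) (zeta2 3 2 + 3 * zeta2 4 1) :=
    (hasSum_term (by norm_num) (by norm_num)).add
      ((hasSum_term (by norm_num) (by norm_num)).mul_left 3)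
  have hl : HasSum (fun p : Index => term 2 3 p + 2 * term 3 2 p + 3 * term 4 1 p)
      (zeta2 2 3 + 2 * zeta2 3 2 + 3 * zeta2 4 1) :=
    ((hasSum_term (by norm_num) (by norm_num)).add
      ((hasSum_term (by norm_num) (by norm_num)).mul_left 2)).add
      ((hasSum_term (by norm_num) (by norm_num)).mul_left 3)
  convert (sumFstEquiv.hasSum_iff.mpr hk).add
    (((Equiv.prodComm _ _).trans sumFstEquiv).hasSum_iff.mpr hl) using 1
  · exact funext one_div_sq_mul_one_div_cube_eq_term
  · ring

end DoubleZeta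

open DoubleZeta in
/-- The shuffle identity ζ(2,3) + 3ζ(3,2) + 6ζ(4,1) = ζ(2)ζ(3). -/
theorem zeta_two_three_shuffle :
    zeta2 2 3 + 3 * zeta2 3 2 + 6 * zeta2 4 1 = zeta1 2 * zeta1 3 := by
  have h := hasSum_one_div_sq_mul_one_div_cube
  exact (((hasSum_zeta1 le_rfl).mul (hasSum_zeta1 (by norm_num)) h.summable).unique h).symm
end
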